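/- Let q be a prime power and let m ≥ n > r ≥ 1 be integers. Then the number of matrices E ∈ F_q^{m×n} with rank E = r such that E^R has rank r is strictly greater than (1 − τ(q^{−1})) times the total number of rank-r matrices in F_q^{m×n}. Equivalently, a uniformly random rank-r matrix E ∈ F_q^{m×n} satisfies rank E^R = r with probability greater than 1 − τ(q^{−1}). -/

import Mathlib

/-!
A rank-`r` matrix `E ∈ F^{m×n}` factors uniquely as `B_W * C`, where `W` is its column space,
`B_W` is a fixed basis matrix of `W` and `C ∈ F^{r×n}` has rank `r`; moreover `E^R = B_W * C^R`.
Both counts therefore carry the factor `#{W : dim W = r}`, and splitting the columns of `C` turns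
the claim into
`(1 - τ(q⁻¹)) ∏_{i<r} (q^n - q^i) < q^{r(n-r)} ∏_{i<r} (q^r - q^i) = q^{nr} ∏_{j=1}^r (1 - q^{-j})`.
For `0 < x ≤ 1/2` the partial Euler products satisfy
`∏_{j=1}^r (1 - x^j) ≥ (1 - x)(1 - x²)(1 - x³)(1 - 2x⁴) > 1 - τ(x)`,
the tail being controlled by the Weierstrass product inequality.
-/

/-- `τ(x) := min(0.72, 2.1·x)`. -/
noncomputable def tau (x : ℝ) : ℝ := min 0.72 (2.1 * x)

/-- The last `r` columns of a matrix (`A^R`). -/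
def matR {F : Type*} {m n : ℕ} (r : ℕ) (hrn : r ≤ n) (A : Matrix (Fin m) (Fin n) F) :
    Matrix (Fin m) (Fin r) F :=
  fun i j => A i ⟨n - r + j.1, by have := j.2; omega⟩

open Finset Matrix Module

lemma Finset.one_sub_sum_le_prod_one_sub {R ι : Type*} [CommRing R] [LinearOrder R]
    [IsStrictOrderedRing R] (s : Finset ι) {f : ι → R} (h0 : ∀ i ∈ s, 0 ≤ f i)
    (h1 : ∀ i ∈ s, f i ≤ 1) : 1 - ∑ i ∈ s, f i ≤ ∏ i ∈ s, (1 - f i) := by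
  classical
  induction s using Finset.induction_on with
  | empty => simp
  | insert a s ha ih =>
    rw [sum_insert ha, prod_insert ha]
    have hfa := h0 a (mem_insert_self a s)
    have hfa1 := h1 a (mem_insert_self a s)
    have hs := ih (fun i hi => h0 i (mem_insert_of_mem hi)) fun i hi => h1 i (mem_insert_of_mem hi)
    have hsum : 0 ≤ ∑ i ∈ s, f i := sum_nonneg fun i hi => h0 i (mem_insert_of_mem hi)
    nlinarith [mul_le_mul_of_nonneg_left hs (sub_nonneg.2 hfa1), mul_nonneg hfa hsum]

lemma sum_range_pow_add_le {x : ℝ} (hx0 : 0 ≤ x) (hx : x ≤ 1 / 2) (a k : ℕ) :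
    ∑ j ∈ range k, x ^ (j + a) ≤ 2 * x ^ a := by
  have hgeom : ∑ j ∈ range k, x ^ j ≤ 2 :=
    calc ∑ j ∈ range k, x ^ j ≤ x ^ 0 / (1 - x) := by
          rw [range_eq_Ico]; exact geom_sum_Ico_le_of_lt_one hx0 (by linarith)
      _ ≤ 2 := by rw [pow_zero, div_le_iff₀ (by linarith)]; linarith
  calc ∑ j ∈ range k, x ^ (j + a) = x ^ a * ∑ j ∈ range k, x ^ j := by
        rw [mul_comm, sum_mul]; simp only [pow_add]
    _ ≤ 2 * x ^ a := by nlinarith [pow_nonneg hx0 a]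

lemma le_prod_range_one_sub_pow {x : ℝ} (hx0 : 0 ≤ x) (hx : x ≤ 1 / 2) (r : ℕ) :
    (1 - x) * (1 - x ^ 2) * (1 - x ^ 3) * (1 - 2 * x ^ 4) ≤
      ∏ j ∈ range r, (1 - x ^ (j + 1)) := by
  have hpow : ∀ j, x ^ j ≤ 1 := fun j => pow_le_one₀ hx0 (by linarith)
  have htail : 1 - 2 * x ^ 4 ≤ ∏ j ∈ range r, (1 - x ^ (3 + j + 1)) :=
    calc 1 - 2 * x ^ 4 ≤ 1 - ∑ j ∈ range r, x ^ (j + 4) := by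
          linarith [sum_range_pow_add_le hx0 hx 4 r]
      _ ≤ ∏ j ∈ range r, (1 - x ^ (j + 4)) :=
          one_sub_sum_le_prod_one_sub _ (fun j _ => pow_nonneg hx0 _) fun j _ => hpow _
      _ = ∏ j ∈ range r, (1 - x ^ (3 + j + 1)) := by
          refine prod_congr rfl fun j _ => ?_; ring_nf
  -- Padding with three more factors `≤ 1` makes the first three factors present for every `r`.
  calc (1 - x) * (1 - x ^ 2) * (1 - x ^ 3) * (1 - 2 * x ^ 4)
      ≤ (∏ j ∈ range 3, (1 - x ^ (j + 1))) * ∏ j ∈ range r, (1 - x ^ (3 + j + 1)) := by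
        rw [show ∏ j ∈ range 3, (1 - x ^ (j + 1)) = (1 - x) * (1 - x ^ 2) * (1 - x ^ 3) by
          simp [prod_range_succ]]
        exact mul_le_mul_of_nonneg_left htail
          (mul_nonneg (mul_nonneg (by linarith) (sub_nonneg.2 (hpow 2))) (sub_nonneg.2 (hpow 3)))
    _ = ∏ j ∈ range (3 + r), (1 - x ^ (j + 1)) := (prod_range_add _ 3 r).symm
    _ ≤ ∏ j ∈ range r, (1 - x ^ (j + 1)) :=
        prod_anti_set_of_le_one (fun j => sub_nonneg.2 (hpow _))
          (fun j => sub_le_self _ (pow_nonneg hx0 _)) (range_subset_range.2 (by omega))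

lemma one_sub_tau_lt {x : ℝ} (hx0 : 0 < x) (hx : x ≤ 1 / 2) :
    1 - tau x < (1 - x) * (1 - x ^ 2) * (1 - x ^ 3) * (1 - 2 * x ^ 4) := by
  have h1 : (1 / 2 : ℝ) ≤ 1 - x := by linarith
  have h2 : (3 / 4 : ℝ) ≤ 1 - x ^ 2 := by nlinarith
  have h3 : (7 / 8 : ℝ) ≤ 1 - x ^ 3 := by nlinarith
  have h4 : (7 / 8 : ℝ) ≤ 1 - 2 * x ^ 4 := by nlinarith [pow_le_pow_left₀ hx0.le hx 4]
  rw [tau]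
  rcases le_total (0.72 : ℝ) (2.1 * x) with h | h
  · rw [min_eq_left h]
    have h12 : (1 / 2 : ℝ) * (3 / 4) ≤ (1 - x) * (1 - x ^ 2) := by nlinarith
    have h123 : (1 / 2 : ℝ) * (3 / 4) * (7 / 8) ≤ (1 - x) * (1 - x ^ 2) * (1 - x ^ 3) := by
      nlinarith
    nlinarith
  · rw [min_eq_right h]
    have e3 : x ^ 3 ≤ 1 / 8 := by nlinarith [pow_le_pow_left₀ hx0.le hx 3]
    have e7 : x ^ 7 ≤ 1 / 128 := by nlinarith [pow_le_pow_left₀ hx0.le hx 7]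
    have e8 : x ^ 8 ≤ 1 / 256 := by nlinarith [pow_le_pow_left₀ hx0.le hx 8]
    nlinarith [mul_le_mul_of_nonneg_left e3 hx0.le, mul_le_mul_of_nonneg_left e7 hx0.le,
      mul_le_mul_of_nonneg_left e8 hx0.le, pow_nonneg hx0.le 5, pow_nonneg hx0.le 6,
      pow_nonneg hx0.le 10, sq_nonneg x, pow_pos hx0 2]

lemma pow_mul_prod_range_pow_sub_pow {Q : ℝ} (hQ : Q ≠ 0) {n r : ℕ} (hrn : r ≤ n) :
    Q ^ (r * (n - r)) * ∏ i ∈ range r, (Q ^ r - Q ^ i) =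
      (Q ^ n) ^ r * ∏ j ∈ range r, (1 - Q⁻¹ ^ (j + 1)) := by
  have hfactor : ∀ i ∈ range r, Q ^ r - Q ^ i = Q ^ r * (1 - Q⁻¹ ^ (r - 1 - i + 1)) := by
    intro i hi
    have hir : i < r := mem_range.1 hi
    rw [show r - 1 - i + 1 = r - i by omega, mul_sub, mul_one,
      show Q ^ r = Q ^ (r - i) * Q ^ i by rw [← pow_add, Nat.sub_add_cancel hir.le], inv_pow,
      mul_comm (Q ^ (r - i)), mul_assoc, mul_inv_cancel₀ (pow_ne_zero _ hQ), mul_one]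
  rw [prod_congr rfl hfactor, prod_mul_distrib, prod_const, card_range,
    prod_range_reflect (fun j => 1 - Q⁻¹ ^ (j + 1)), ← mul_assoc, ← pow_mul, ← pow_add,
    ← pow_mul, ← Nat.mul_add, Nat.sub_add_cancel hrn, mul_comm r n]

lemma one_sub_tau_mul_prod_lt {Q : ℝ} (hQ : 2 ≤ Q) {n r : ℕ} (hrn : r ≤ n) :
    (1 - tau Q⁻¹) * ∏ i ∈ range r, (Q ^ n - Q ^ i) <
      Q ^ (r * (n - r)) * ∏ i ∈ range r, (Q ^ r - Q ^ i) := by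
  have hx0 : 0 < Q⁻¹ := by positivity
  have hx : Q⁻¹ ≤ 1 / 2 := by rw [one_div]; exact inv_anti₀ two_pos hQ
  have htau : 0 ≤ 1 - tau Q⁻¹ := by
    have := min_le_left (0.72 : ℝ) (2.1 * Q⁻¹); rw [tau]; linarith
  have hprod : ∏ i ∈ range r, (Q ^ n - Q ^ i) ≤ (Q ^ n) ^ r :=
    calc ∏ i ∈ range r, (Q ^ n - Q ^ i) ≤ ∏ i ∈ range r, Q ^ n := by
          refine prod_le_prod (fun i hi => sub_nonneg.2 ?_) fun i _ => sub_le_self _ (by positivity)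
          exact pow_le_pow_right₀ (by linarith) (by have := mem_range.1 hi; omega)
      _ = (Q ^ n) ^ r := by rw [prod_const, card_range]
  rw [pow_mul_prod_range_pow_sub_pow (by positivity) hrn]
  calc (1 - tau Q⁻¹) * ∏ i ∈ range r, (Q ^ n - Q ^ i) ≤ (1 - tau Q⁻¹) * (Q ^ n) ^ r :=
        mul_le_mul_of_nonneg_left hprod htau
    _ < (Q ^ n) ^ r * ∏ j ∈ range r, (1 - Q⁻¹ ^ (j + 1)) := by
        rw [mul_comm]
        exact mul_lt_mul_of_pos_left
          ((one_sub_tau_lt hx0 hx).trans_le (le_prod_range_one_sub_pow hx0.le hx r)) (by positivity)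

lemma Matrix.rank_eq_card_height_iff {R m n : Type*} [Field R] [Fintype m] [Fintype n]
    (A : Matrix m n R) : A.rank = Fintype.card m ↔ LinearIndependent R A.row :=
  ⟨fun h => linearIndependent_iff_card_eq_finrank_span.2
      (by rw [Set.finrank, ← rank_eq_finrank_span_row, h]),
    LinearIndependent.rank_matrix⟩

lemma cast_card_rank_eq_height {F : Type*} [Field F] [Fintype F] {r n : ℕ} (h : r ≤ n) :
    (Nat.card {C : Matrix (Fin r) (Fin n) F // C.rank = r} : ℝ) =
      ∏ i ∈ range r, ((Fintype.card F : ℝ) ^ n - (Fintype.card F : ℝ) ^ i) := by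
  have e : {C : Matrix (Fin r) (Fin n) F // C.rank = r} ≃
      {s : Fin r → Fin n → F // LinearIndependent F s} :=
    Matrix.of.symm.subtypeEquiv fun C => by
      have := C.rank_eq_card_height_iff
      rwa [Fintype.card_fin] at this
  rw [Nat.card_congr e, card_linearIndependent (by rwa [finrank_fin_fun]), finrank_fin_fun,
    Fin.prod_univ_eq_prod_range (fun i => Fintype.card F ^ n - Fintype.card F ^ i), Nat.cast_prod]
  refine prod_congr rfl fun i hi => ?_
  rw [Nat.cast_sub (Nat.pow_le_pow_right Fintype.card_pos (by have := mem_range.1 hi; omega)),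
    Nat.cast_pow, Nat.cast_pow]

namespace Matrix

variable {R κ α β : Type*}

def toColsEquiv : Matrix κ (α ⊕ β) R ≃ Matrix κ β R × Matrix κ α R where
  toFun C := (C.toCols₂, C.toCols₁)
  invFun p := fromCols p.2 p.1
  left_inv := fromCols_toCols
  right_inv p := by simp

lemma card_subtype_toCols₂ (P : Matrix κ β R → Prop) :
    Nat.card {C : Matrix κ (α ⊕ β) R // P C.toCols₂} =
      Nat.card {U // P U} * Nat.card (Matrix κ α R) := by
  rw [← Nat.card_prod]
  exact Nat.card_congr <| (toColsEquiv.subtypeEquiv fun C => Iff.rfl).trans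
    Equiv.prodSubtypeFstEquivSubtypeProd

end Matrix

lemma card_subtype_matR {F : Type*} [Fintype F] {m n r : ℕ} (h : r ≤ n)
    (P : Matrix (Fin m) (Fin r) F → Prop) :
    Nat.card {A : Matrix (Fin m) (Fin n) F // P (matR r h A)} =
      Fintype.card F ^ (m * (n - r)) * Nat.card {U // P U} := by
  -- `matR r h A` is by definition the right block of `A` with columns split as `(n - r) + r`.
  rw [Nat.card_congr ((Matrix.reindex (Equiv.refl _)
    (finSumFinEquiv.trans (finCongr (Nat.sub_add_cancel h))).symm).subtypeEquiv
      (p := fun A => P (matR r h A)) (q := fun A => P A.toCols₂) fun A => Iff.rfl),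
    Matrix.card_subtype_toCols₂, mul_comm]
  simp [Nat.card_eq_fintype_card, Matrix, ← pow_mul, mul_comm]

-- Mathlib's `Module.Grassmannian` parametrises rank-`r` quotients rather than subspaces.
abbrev SubspaceOfFinrank (F V : Type*) [Field F] [AddCommGroup V] [Module F V] (r : ℕ) :=
  {W : Submodule F V // finrank F W = r}

namespace SubspaceOfFinrank

variable {F : Type*} [Field F] {κ ι : Type*} [Fintype κ] [Fintype ι] {r : ℕ}

lemma nonempty {V : Type*} [AddCommGroup V] [Module F V] (h : r ≤ finrank F V) :
    Nonempty (SubspaceOfFinrank F V r) := by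
  obtain ⟨f, hf⟩ := exists_linearIndependent_of_le_finrank h
  exact ⟨⟨Submodule.span F (Set.range f), by rw [finrank_span_eq_card hf, Fintype.card_fin]⟩⟩

noncomputable def basisMatrix (W : SubspaceOfFinrank F (κ → F) r) : Matrix κ (Fin r) F :=
  Matrix.of fun i j => (finBasisOfFinrankEq F W.1 W.2 j : κ → F) i

lemma mulVecLin_basisMatrix (W : SubspaceOfFinrank F (κ → F) r) :
    (basisMatrix W).mulVecLin =
      W.1.subtype ∘ₗ (finBasisOfFinrankEq F W.1 W.2).equivFun.symm.toLinearMap := by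
  ext x i
  simp [basisMatrix, Matrix.mulVec, dotProduct, Pi.single_apply]

lemma injective_mulVecLin_basisMatrix (W : SubspaceOfFinrank F (κ → F) r) :
    Function.Injective (basisMatrix W).mulVecLin := by
  rw [mulVecLin_basisMatrix]
  exact Subtype.val_injective.comp (LinearEquiv.injective _)

lemma rank_basisMatrix_mul (W : SubspaceOfFinrank F (κ → F) r) (C : Matrix (Fin r) ι F) :
    (basisMatrix W * C).rank = C.rank := by
  rw [Matrix.rank, Matrix.rank, Matrix.mulVecLin_mul, LinearMap.range_comp]
  exact (Submodule.equivMapOfInjective _ (injective_mulVecLin_basisMatrix W) _).symm.finrank_eq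

lemma range_mulVecLin_basisMatrix_mul (W : SubspaceOfFinrank F (κ → F) r)
    {C : Matrix (Fin r) ι F} (hC : C.rank = r) :
    LinearMap.range (basisMatrix W * C).mulVecLin = W.1 := by
  have hCtop : LinearMap.range C.mulVecLin = ⊤ :=
    Submodule.eq_top_of_finrank_eq (by rw [← Matrix.rank, hC, finrank_fin_fun])
  rw [Matrix.mulVecLin_mul, LinearMap.range_comp, hCtop, Submodule.map_top, mulVecLin_basisMatrix,
    LinearMap.range_comp, LinearEquiv.range, Submodule.map_top, Submodule.range_subtype]

lemma rank_eq_of_rank_submatrix_eq {ι' : Type*} [Fintype ι'] {C : Matrix (Fin r) ι F}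
    {c : ι' → ι} (h : (C.submatrix id c).rank = r) : C.rank = r :=
  le_antisymm (C.rank_le_card_height.trans_eq (Fintype.card_fin r))
    (h.ge.trans (C.rank_submatrix_le id c))

variable [DecidableEq ι]

lemma exists_basisMatrix_mul_eq {E : Matrix κ ι F} (hE : E.rank = r) :
    ∃ C : Matrix (Fin r) ι F,
      basisMatrix (⟨LinearMap.range E.mulVecLin, hE⟩ : SubspaceOfFinrank F (κ → F) r) * C = E := by
  refine ⟨LinearMap.toMatrix'
    ((finBasisOfFinrankEq F _ hE).equivFun ∘ₗ E.mulVecLin.rangeRestrict), ?_⟩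
  apply Matrix.toLin'.injective
  rw [Matrix.toLin'_mul, Matrix.toLin'_toMatrix', Matrix.toLin'_apply', Matrix.toLin'_apply',
    mulVecLin_basisMatrix]
  ext x i
  simp

variable (F κ ι r) in
noncomputable def equivRankEq :
    {C : Matrix (Fin r) ι F // C.rank = r} × SubspaceOfFinrank F (κ → F) r ≃
      {E : Matrix κ ι F // E.rank = r} :=
  Equiv.ofBijective (fun p => ⟨basisMatrix p.2 * p.1.1, by rw [rank_basisMatrix_mul, p.1.2]⟩) <| by
    constructor
    · rintro ⟨⟨C, hC⟩, W⟩ ⟨⟨C', hC'⟩, W'⟩ h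
      have hE : basisMatrix W * C = basisMatrix W' * C' := congrArg Subtype.val h
      obtain rfl : W = W' := Subtype.ext <| by
        rw [← range_mulVecLin_basisMatrix_mul W hC, ← range_mulVecLin_basisMatrix_mul W' hC', hE]
      have hlin : C.mulVecLin = C'.mulVecLin := by
        rw [← LinearMap.cancel_left (injective_mulVecLin_basisMatrix W), ← Matrix.mulVecLin_mul,
          ← Matrix.mulVecLin_mul, hE]
      rw [← Matrix.toLin'_apply', ← Matrix.toLin'_apply', Matrix.toLin'.injective.eq_iff] at hlin
      subst hlin
      rfl
    · rintro ⟨E, hE⟩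
      obtain ⟨C, hC⟩ := exists_basisMatrix_mul_eq hE
      exact ⟨⟨⟨C, by rw [← rank_basisMatrix_mul ⟨_, hE⟩, hC, hE]⟩, _⟩, Subtype.ext hC⟩

lemma card_rank_eq :
    Nat.card {E : Matrix κ ι F // E.rank = r} =
      Nat.card {C : Matrix (Fin r) ι F // C.rank = r} *
        Nat.card (SubspaceOfFinrank F (κ → F) r) := by
  rw [← Nat.card_prod, Nat.card_congr (equivRankEq F κ ι r)]

lemma card_rank_eq_and_rank_submatrix_eq {ι' : Type*} [Fintype ι'] (c : ι' → ι) :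
    Nat.card {E : Matrix κ ι F // E.rank = r ∧ (E.submatrix id c).rank = r} =
      Nat.card {C : Matrix (Fin r) ι F // (C.submatrix id c).rank = r} *
        Nat.card (SubspaceOfFinrank F (κ → F) r) := by
  rw [← Nat.card_prod]
  refine Nat.card_congr <| (Equiv.subtypeSubtypeEquivSubtypeInter _ _).symm.trans <|
    (((equivRankEq F κ ι r).subtypeEquiv fun p => ?_).symm.trans
      Equiv.prodSubtypeFstEquivSubtypeProd).trans <|
    ((Equiv.subtypeSubtypeEquivSubtypeInter _ _).trans <|
      Equiv.subtypeEquivRight fun C => and_iff_right_of_imp rank_eq_of_rank_submatrix_eq).prodCongr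
        (Equiv.refl _)
  show _ ↔ (basisMatrix p.2 * p.1.1.submatrix id c).rank = r
  rw [rank_basisMatrix_mul]

end SubspaceOfFinrank

lemma card_subspaceOfFinrank_pos {F : Type*} [Field F] [Fintype F] {m r : ℕ} (h : r ≤ m) :
    0 < Nat.card (SubspaceOfFinrank F (Fin m → F) r) := by
  have := SubspaceOfFinrank.nonempty (F := F) (V := Fin m → F) (h.trans_eq (finrank_fin_fun F).symm)
  exact Nat.card_pos

lemma card_rank_eq_and_rank_matR_eq {F : Type*} [Field F] {m n r : ℕ} (h : r ≤ n) :
    Nat.card {E : Matrix (Fin m) (Fin n) F // E.rank = r ∧ (matR r h E).rank = r} =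
      Nat.card {C : Matrix (Fin r) (Fin n) F // (matR r h C).rank = r} *
        Nat.card (SubspaceOfFinrank F (Fin m → F) r) :=
  SubspaceOfFinrank.card_rank_eq_and_rank_submatrix_eq
    (Fin.cast (Nat.sub_add_cancel h) ∘ Fin.natAdd (n - r))

theorem stmt10_general (F : Type*) [Field F] [Fintype F] (m n r : ℕ)
    (hnm : n ≤ m) (hrn : r < n) :
    (1 - tau (Fintype.card F : ℝ)⁻¹) *
        (Nat.card {E : Matrix (Fin m) (Fin n) F // E.rank = r} : ℝ) <
      (Nat.card {E : Matrix (Fin m) (Fin n) F //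
          E.rank = r ∧ (matR r hrn.le E).rank = r} : ℝ) := by
  have hsub : (0 : ℝ) < Nat.card (SubspaceOfFinrank F (Fin m → F) r) := by
    exact_mod_cast card_subspaceOfFinrank_pos (hrn.le.trans hnm)
  have hq : (2 : ℝ) ≤ Fintype.card F := by exact_mod_cast Fintype.one_lt_card
  rw [SubspaceOfFinrank.card_rank_eq, card_rank_eq_and_rank_matR_eq,
    card_subtype_matR hrn.le (fun U => U.rank = r)]
  push_cast
  rw [cast_card_rank_eq_height hrn.le, cast_card_rank_eq_height le_rfl, ← mul_assoc]
  exact mul_lt_mul_of_pos_right (one_sub_tau_mul_prod_lt hq hrn.le) hsub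

/-- Let `F` be a finite field of cardinality `q`, and `m ≥ n > r ≥ 1`.  Then the number of
`E ∈ F^{m×n}` with `rank E = r` and `rank E^R = r` is strictly greater than
`(1 − τ(q^{−1}))` times the total number of rank-`r` matrices in `F^{m×n}`. -/
theorem stmt10 (F : Type*) [Field F] [Fintype F] (m n r : ℕ)
    (hnm : n ≤ m) (hrn : r < n) (hr : 1 ≤ r) :
    (1 - tau (Fintype.card F : ℝ)⁻¹) *
        (Nat.card {E : Matrix (Fin m) (Fin n) F // E.rank = r} : ℝ) <
      (Nat.card {E : Matrix (Fin m) (Fin n) F //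
          E.rank = r ∧ (matR r hrn.le E).rank = r} : ℝ) :=
  stmt10_general F m n r hnm hrn
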